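/- Let n ≥ 4 with n ≡ 1 (mod 3). Then the signless Laplacian spectral radius of the join K₁ ∨ ((n−1)/3)K₃ (one vertex joined to all vertices of (n−1)/3 disjoint triangles) equals (n + 4 + √((n−4)² + 16))/2. -/

import Mathlib

open SimpleGraph Finset

/-- The signless Laplacian spectral radius of a graph: the largest real eigenvalue
(root of the characteristic polynomial) of `Q(G) = D(G) + A(G)`. -/
noncomputable def qrad {n : ℕ} (G : SimpleGraph (Fin n)) : ℝ :=
  letI := Classical.decRel G.Adj
  sSup {x : ℝ | (Matrix.charpoly (G.degMatrix ℝ + G.adjMatrix ℝ)).IsRoot x}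

/-- `contains H G` : `G` contains a subgraph isomorphic to `H`. -/
def contains {α β : Type*} (H : SimpleGraph α) (G : SimpleGraph β) : Prop :=
  ∃ f : α → β, Function.Injective f ∧ ∀ a b, H.Adj a b → G.Adj (f a) (f b)

/-- The theta graph θ(1,2,2) (= K₄ minus an edge). -/
def theta122 : SimpleGraph (Fin 4) :=
  SimpleGraph.fromEdgeSet {s(0,1), s(0,2), s(1,2), s(0,3), s(1,3)}

/-- The theta graph θ(1,2,3). -/
def theta123 : SimpleGraph (Fin 5) :=
  SimpleGraph.fromEdgeSet {s(0,1), s(0,2), s(2,1), s(0,3), s(3,4), s(4,1)}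

/-- The friendship graph `F n`: center `0`; the other vertices are paired up
`{1,2}, {3,4}, …` into triangles through the center, with a pendant vertex left
over when `n` is even. -/
def friendship (n : ℕ) : SimpleGraph (Fin n) :=
  SimpleGraph.fromRel (fun i j => i.val = 0 ∨ (i.val + 1) / 2 = (j.val + 1) / 2)

/-- `Sgraph n k` = `S_{n,k}`, the join of `K_k` with `n - k` isolated vertices. -/
def Sgraph (n k : ℕ) : SimpleGraph (Fin n) :=
  SimpleGraph.fromRel (fun i _ => i.val < k)

/-- `Splus n` = `S_{n,1}⁺`, the star `K_{1,n-1}` plus one edge between two leaves. -/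
def Splus (n : ℕ) : SimpleGraph (Fin n) :=
  SimpleGraph.fromRel (fun i j => i.val = 0 ∨ (i.val = 1 ∧ j.val = 2))

/-- `K₁ ∨ ((n-1)/3) K₃` : vertex `0` joined to `(n-1)/3` disjoint triangles. -/
def joinK3s (n : ℕ) : SimpleGraph (Fin n) :=
  SimpleGraph.fromRel (fun i j => i.val = 0 ∨ (i.val - 1) / 3 = (j.val - 1) / 3)

/-- The number of edges of `G` lying inside the vertex set `s` (the number of
edges of the induced subgraph `G[s]`). -/
noncomputable def edgesIn {V : Type*} (G : SimpleGraph V) (s : Set V) : ℕ :=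
  {e | e ∈ G.edgeSet ∧ ∀ v ∈ e, v ∈ s}.ncard


/-!
Write `Q` for the signless Laplacian of `K₁ ∨ kK₃`, `n = 3k + 1`, with centre `0`. If
`Q v = x v` with `x > 5`, then on a triangle with coordinate sum `S` every vertex satisfies
`(x - 2) vⱼ = v₀ + S`; summing over the triangle gives `(x - 5) S = 3 v₀`, and the centre's row
`x v₀ = (n - 1) v₀ + ∑ S` then yields `v₀ (x² - (n + 4) x + 4 (n - 1)) = 0`, where `v₀ = 0`
would force `v = 0`. So every eigenvalue is at most `5` or a root of this quadratic, whose larger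
root `r ≥ 5` is attained by the vector equal to `r - 5` at the centre and `1` elsewhere.
-/

open Matrix

namespace SimpleGraph

variable {V : Type*} [Fintype V] [DecidableEq V] (R : Type*) (G : SimpleGraph V)
  [DecidableRel G.Adj]

def signlessLapMatrix [AddMonoidWithOne R] : Matrix V V R := G.degMatrix R + G.adjMatrix R

variable {R G}

theorem signlessLapMatrix_mulVec_apply [NonAssocSemiring R] (v : V → R) (i : V) :
    (G.signlessLapMatrix R *ᵥ v) i = G.degree i * v i + ∑ j ∈ G.neighborFinset i, v j := by
  rw [signlessLapMatrix, Matrix.add_mulVec, Pi.add_apply, degMatrix_mulVec_apply,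
    adjMatrix_mulVec_apply]

end SimpleGraph

theorem Matrix.isRoot_charpoly_iff_exists_mulVec_eq_smul {K ι : Type*} [Field K] [Fintype ι]
    [DecidableEq ι] (A : Matrix ι ι K) (r : K) :
    A.charpoly.IsRoot r ↔ ∃ v ≠ 0, A *ᵥ v = r • v := by
  rw [← Matrix.mem_spectrum_iff_isRoot_charpoly, ← spectrum_toLin',
    ← Module.End.hasEigenvalue_iff_mem_spectrum, Module.End.hasEigenvalue_iff,
    Submodule.ne_bot_iff]
  simp [and_comm]

noncomputable def largestRoot (b c : ℝ) : ℝ := (b + √(b ^ 2 - 4 * c)) / 2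

theorem largestRoot_isRoot {b c : ℝ} (h : 4 * c ≤ b ^ 2) :
    largestRoot b c ^ 2 - b * largestRoot b c + c = 0 := by
  have hs := Real.sq_sqrt (sub_nonneg.mpr h)
  unfold largestRoot
  linear_combination hs / 4

theorem le_largestRoot {b c y : ℝ} (hy : y ^ 2 - b * y + c ≤ 0) : y ≤ largestRoot b c := by
  have h : |2 * y - b| ≤ √(b ^ 2 - 4 * c) := Real.abs_le_sqrt (by linear_combination 4 * hy)
  unfold largestRoot
  linarith [le_abs_self (2 * y - b)]

namespace JoinK3s

variable {k : ℕ}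

def triangle (k t : ℕ) : Finset (Fin (3 * k + 1)) := {i | i ≠ 0 ∧ (i.val - 1) / 3 = t}

theorem mem_triangle_self {i : Fin (3 * k + 1)} (hi : i ≠ 0) :
    i ∈ triangle k ((i.val - 1) / 3) := by
  simp [triangle, hi]

theorem triangle_index_lt {i : Fin (3 * k + 1)} (hi : i ≠ 0) : (i.val - 1) / 3 < k := by
  have := i.isLt
  have := Fin.val_ne_zero_iff.mpr hi
  omega

theorem triangle_eq {t : ℕ} (ht : t < k) :
    triangle k t = {⟨3 * t + 1, by omega⟩, ⟨3 * t + 2, by omega⟩, ⟨3 * t + 3, by omega⟩} := by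
  ext i
  simp only [triangle, mem_filter, mem_univ, true_and, mem_insert, mem_singleton,
    ← Fin.val_ne_zero_iff, Fin.ext_iff]
  omega

theorem card_triangle {t : ℕ} (ht : t < k) : (triangle k t).card = 3 := by
  rw [triangle_eq ht]
  grind

theorem sum_erase_zero_eq_sum_triangle (v : Fin (3 * k + 1) → ℝ) :
    ∑ j ∈ univ.erase 0, v j = ∑ t ∈ range k, ∑ j ∈ triangle k t, v j := by
  have h : ∀ t, triangle k t = (univ.erase 0).filter (fun j => (j.val - 1) / 3 = t) := by
    intro t
    ext j
    simp [triangle]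
  simp_rw [h]
  refine (sum_fiberwise_of_maps_to (fun j hj => mem_range.mpr ?_) v).symm
  exact triangle_index_lt (ne_of_mem_erase hj)

variable [DecidableRel (joinK3s (3 * k + 1)).Adj]

theorem neighborFinset_zero : (joinK3s (3 * k + 1)).neighborFinset 0 = univ.erase 0 := by
  ext j
  rw [mem_neighborFinset, mem_erase]
  simp [joinK3s, eq_comm]

theorem neighborFinset_of_ne_zero {i : Fin (3 * k + 1)} (hi : i ≠ 0) :
    (joinK3s (3 * k + 1)).neighborFinset i =
      insert 0 ((triangle k ((i.val - 1) / 3)).erase i) := by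
  ext j
  rw [mem_neighborFinset]
  simp only [joinK3s, fromRel_adj, triangle, mem_insert, mem_erase, mem_filter, mem_univ,
    true_and, ← Fin.val_ne_zero_iff, Fin.ext_iff, Fin.val_zero] at hi ⊢
  omega

theorem signlessLapMatrix_mulVec_zero (v : Fin (3 * k + 1) → ℝ) :
    ((joinK3s (3 * k + 1)).signlessLapMatrix ℝ *ᵥ v) 0
      = 3 * k * v 0 + ∑ t ∈ range k, ∑ j ∈ triangle k t, v j := by
  rw [signlessLapMatrix_mulVec_apply, ← card_neighborFinset_eq_degree, neighborFinset_zero,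
    card_erase_of_mem (mem_univ 0), card_univ, Fintype.card_fin, sum_erase_zero_eq_sum_triangle]
  push_cast
  ring

theorem signlessLapMatrix_mulVec_of_ne_zero (v : Fin (3 * k + 1) → ℝ) {i : Fin (3 * k + 1)}
    (hi : i ≠ 0) : ((joinK3s (3 * k + 1)).signlessLapMatrix ℝ *ᵥ v) i
      = 2 * v i + v 0 + ∑ j ∈ triangle k ((i.val - 1) / 3), v j := by
  have h0 : 0 ∉ (triangle k ((i.val - 1) / 3)).erase i := by simp [triangle]
  rw [signlessLapMatrix_mulVec_apply, ← card_neighborFinset_eq_degree,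
    neighborFinset_of_ne_zero hi, card_insert_of_notMem h0,
    card_erase_of_mem (mem_triangle_self hi), card_triangle (triangle_index_lt hi), sum_insert h0,
    sum_erase_eq_sub (mem_triangle_self hi)]
  push_cast
  ring

theorem signlessLapMatrix_mulVec_eq_smul_of_quadratic {r : ℝ}
    (hr : r ^ 2 - (3 * k + 5) * r + 12 * k = 0) :
    let v : Fin (3 * k + 1) → ℝ := fun i => if i = 0 then r - 5 else 1
    (joinK3s (3 * k + 1)).signlessLapMatrix ℝ *ᵥ v = r • v := by
  intro v
  have hsum : ∀ t < k, ∑ j ∈ triangle k t, v j = 3 := fun t ht => by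
    rw [sum_congr rfl fun j hj => if_neg (mem_filter.mp hj).2.1, sum_const, card_triangle ht]
    norm_num
  funext i
  by_cases hi : i = 0
  · subst hi
    rw [signlessLapMatrix_mulVec_zero, sum_congr rfl fun t ht => hsum t (mem_range.mp ht)]
    simp only [v, if_pos, sum_const, card_range, Pi.smul_apply, smul_eq_mul, nsmul_eq_mul]
    linear_combination -hr
  · rw [signlessLapMatrix_mulVec_of_ne_zero v hi, hsum _ (triangle_index_lt hi)]
    simp only [v, if_neg hi, if_pos, Pi.smul_apply, smul_eq_mul]
    ring

theorem quadratic_of_mulVec_eq_smul {x : ℝ} (hx : 5 < x) {v : Fin (3 * k + 1) → ℝ} (hv : v ≠ 0)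
    (h : (joinK3s (3 * k + 1)).signlessLapMatrix ℝ *ᵥ v = x • v) :
    x ^ 2 - (3 * k + 5) * x + 12 * k = 0 := by
  set S : ℕ → ℝ := fun t => ∑ j ∈ triangle k t, v j
  have hrow : ∀ i ≠ 0, (x - 2) * v i = v 0 + S ((i.val - 1) / 3) := fun i hi => by
    have := congrFun h i
    rw [signlessLapMatrix_mulVec_of_ne_zero v hi, Pi.smul_apply, smul_eq_mul] at this
    linear_combination -this
  have htriangle : ∀ t < k, (x - 5) * S t = 3 * v 0 := fun t ht => by
    have hsum : (x - 2) * S t = ∑ j ∈ triangle k t, (v 0 + S t) := by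
      rw [mul_sum]
      refine sum_congr rfl fun j hj => ?_
      obtain ⟨hj0, rfl⟩ := (mem_filter.mp hj).2
      exact hrow j hj0
    rw [sum_const, card_triangle ht, nsmul_eq_mul] at hsum
    linear_combination hsum
  have hzero : x * v 0 = 3 * k * v 0 + ∑ t ∈ range k, S t := by
    rw [← signlessLapMatrix_mulVec_zero, h, Pi.smul_apply, smul_eq_mul]
  have hsumS : (x - 5) * ∑ t ∈ range k, S t = 3 * k * v 0 := by
    rw [mul_sum, sum_congr rfl fun t ht => htriangle t (mem_range.mp ht), sum_const, card_range,
      nsmul_eq_mul]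
    ring
  have hfactor : v 0 * (x ^ 2 - (3 * k + 5) * x + 12 * k) = 0 := by
    linear_combination (x - 5) * hzero + hsumS
  refine (mul_eq_zero.mp hfactor).resolve_left fun hv0 => hv (funext fun i => ?_)
  by_cases hi : i = 0
  · rw [hi, hv0, Pi.zero_apply]
  · have hS : S ((i.val - 1) / 3) = 0 := by
      have := htriangle _ (triangle_index_lt hi)
      rw [hv0, mul_zero] at this
      exact (mul_eq_zero.mp this).resolve_left (by linarith)
    have := hrow i hi
    rw [hv0, hS, add_zero] at this
    exact (mul_eq_zero.mp this).resolve_left (by linarith)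

theorem isGreatest_isRoot_charpoly_signlessLapMatrix (hk : 0 < k) :
    IsGreatest {x | ((joinK3s (3 * k + 1)).signlessLapMatrix ℝ).charpoly.IsRoot x}
      (largestRoot (3 * k + 5) (12 * k)) := by
  set r := largestRoot (3 * k + 5) (12 * k)
  have hr : r ^ 2 - (3 * k + 5) * r + 12 * k = 0 :=
    largestRoot_isRoot (by nlinarith [sq_nonneg ((k : ℝ) - 1)])
  have hr5 : 5 ≤ r := le_largestRoot (by nlinarith)
  constructor
  · refine (isRoot_charpoly_iff_exists_mulVec_eq_smul _ _).mpr
      ⟨_, fun hv => ?_, signlessLapMatrix_mulVec_eq_smul_of_quadratic hr⟩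
    have := congrFun hv ⟨1, by omega⟩
    simp [Fin.ext_iff] at this
  · intro x hx
    obtain ⟨v, hv, hx⟩ := (isRoot_charpoly_iff_exists_mulVec_eq_smul _ _).mp hx
    rcases le_or_gt x 5 with hx5 | hx5
    · exact hx5.trans hr5
    · exact le_largestRoot (quadratic_of_mulVec_eq_smul hx5 hv hx).le

end JoinK3s

/-- For `n ≥ 4` with `n ≡ 1 (mod 3)`,
`q(K₁ ∨ ((n−1)/3)K₃) = (n + 4 + √((n−4)² + 16))/2`. -/
theorem stmt5 (n : ℕ) (hn : 4 ≤ n) (h3 : n % 3 = 1) :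
    qrad (joinK3s n) = ((n : ℝ) + 4 + Real.sqrt (((n : ℝ) - 4) ^ 2 + 16)) / 2 := by
  obtain ⟨k, rfl⟩ : ∃ k, n = 3 * k + 1 := ⟨n / 3, by omega⟩
  have hvalue : ((3 * k + 1 : ℕ) + 4 + √(((3 * k + 1 : ℕ) - 4) ^ 2 + 16)) / 2
      = largestRoot (3 * k + 5) (12 * k) := by
    rw [largestRoot]
    push_cast
    ring_nf
  classical
  rw [qrad, hvalue]
  exact (JoinK3s.isGreatest_isRoot_charpoly_signlessLapMatrix (by omega)).csSup_eq
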